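/- Let A, B, C, D be four coplanar points in Euclidean 3-space that are not all collinear, and suppose the four triangles ABC, ABD, ACD, BCD all have the same area. Then the four points are the vertices of a parallelogram: for some pairing of the four points into two pairs, the midpoint of the segment joining one pair equals the midpoint of the segment joining the other pair (i.e., midpoint of AB = midpoint of CD, or midpoint of AC = midpoint of BD, or midpoint of AD = midpoint of BC). -/

import Mathlib

/-!
In the plane of `A, B, C` write `D - A = s • (B - A) + t • (C - A)`. Triangle areas scale by the
absolute determinant of this change of coordinates, so `ABD`, `ACD`, `BCD` have `|t|`, `|s|`,
`|1 - s - t|` times the area of `ABC`, which is nonzero since the four points are not collinear.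
Hence `|s| = |t| = |1 - s - t| = 1`, with the three solutions `(s, t) = (1, 1), (1, -1), (-1, 1)`,
one for each pairing of the vertices into diagonals.
-/

/-- The area of the triangle `XYZ`: half the product of the lengths of the
sides `XY`, `XZ` and the sine of the angle at `X`. -/
noncomputable def triArea (X Y Z : EuclideanSpace ℝ (Fin 3)) : ℝ :=
  dist X Y * dist X Z * Real.sin (EuclideanGeometry.angle Y X Z) / 2

open scoped InnerProductSpace

section Gram

variable {V : Type*} [NormedAddCommGroup V] [InnerProductSpace ℝ V]

def gramDet (x y : V) : ℝ := ⟪x, x⟫_ℝ * ⟪y, y⟫_ℝ - ⟪x, y⟫_ℝ * ⟪x, y⟫_ℝ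

lemma gramDet_smul_add_smul (u v : V) (a b c d : ℝ) :
    gramDet (a • u + b • v) (c • u + d • v) = (a * d - b * c) ^ 2 * gramDet u v := by
  simp only [gramDet, inner_add_left, inner_add_right, real_inner_smul_left,
    real_inner_smul_right, real_inner_comm u v]
  ring

end Gram

section Affine

variable {k V P : Type*} [Field k] [AddCommGroup V] [Module k V] [AddTorsor V P]

lemma collinear_of_collinear_triples {p₁ p₂ p₃ p₄ : P}
    (h₁₂₃ : Collinear k {p₁, p₂, p₃}) (h₁₂₄ : Collinear k {p₁, p₂, p₄})
    (h₁₃₄ : Collinear k {p₁, p₃, p₄}) : Collinear k {p₁, p₂, p₃, p₄} := by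
  by_cases h₁₂ : p₁ = p₂
  · subst h₁₂
    rwa [Set.insert_eq_of_mem (Set.mem_insert _ _)]
  · have h := collinear_insert_insert_of_mem_affineSpan_pair
      (h₁₂₃.mem_affineSpan_of_mem_of_ne (p₃ := p₃) (by simp) (by simp) (by simp) h₁₂)
      (h₁₂₄.mem_affineSpan_of_mem_of_ne (p₃ := p₄) (by simp) (by simp) (by simp) h₁₂)
    convert h using 1
    grind

lemma exists_vsub_eq_smul_add_smul_of_coplanar {p₁ p₂ p₃ p₄ : P}
    (hncol : ¬ Collinear k {p₁, p₂, p₃}) (hcop : Coplanar k {p₁, p₂, p₃, p₄}) :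
    ∃ s t : k, p₄ -ᵥ p₁ = s • (p₂ -ᵥ p₁) + t • (p₃ -ᵥ p₁) := by
  have := hcop.finiteDimensional_vectorSpan
  have hrank : Module.finrank k (vectorSpan k {p₁, p₂, p₃}) = 2 := by
    have := (affineIndependent_iff_not_collinear_set.mpr hncol).finrank_vectorSpan
      (n := 2) (by simp)
    rwa [Matrix.range_cons, Matrix.range_cons, Matrix.range_cons_empty, Set.singleton_union,
      Set.singleton_union] at this
  have hspan : vectorSpan k {p₁, p₂, p₃} = vectorSpan k {p₁, p₂, p₃, p₄} :=
    Submodule.eq_of_le_of_finrank_le (vectorSpan_mono k (by grind))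
      (hrank ▸ (coplanar_iff_finrank_le_two.mp hcop))
  have hmem : p₄ -ᵥ p₁ ∈ vectorSpan k {p₁, p₂, p₃} :=
    hspan ▸ vsub_mem_vectorSpan k (by simp) (by simp)
  rw [vectorSpan_eq_span_vsub_set_right k (Set.mem_insert _ _)] at hmem
  simp only [Set.image_insert_eq, Set.image_singleton, vsub_self,
    Submodule.span_insert_zero, Submodule.mem_span_pair] at hmem
  obtain ⟨s, t, hst⟩ := hmem
  exact ⟨s, t, hst.symm⟩

end Affine

lemma triArea_eq_sqrt_gramDet (X Y Z : EuclideanSpace ℝ (Fin 3)) :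
    triArea X Y Z = √(gramDet (Y - X) (Z - X)) / 2 := by
  rw [triArea, gramDet, ← InnerProductGeometry.sin_angle_mul_norm_mul_norm,
    EuclideanGeometry.angle, dist_comm X Y, dist_comm X Z, dist_eq_norm, dist_eq_norm]
  simp only [vsub_eq_sub]
  ring

lemma triArea_eq_zero_iff {X Y Z : EuclideanSpace ℝ (Fin 3)} :
    triArea X Y Z = 0 ↔ Collinear ℝ {X, Y, Z} := by
  rw [Set.insert_comm, EuclideanGeometry.collinear_iff_eq_or_eq_or_sin_eq_zero, triArea,
    div_eq_zero_iff, mul_eq_zero, mul_eq_zero, dist_eq_zero, dist_eq_zero]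
  simp only [two_ne_zero, or_false, eq_comm (a := X), or_assoc]

lemma triArea_eq_abs_mul_triArea {P Q R X Y Z : EuclideanSpace ℝ (Fin 3)} {a b c d : ℝ}
    (hY : Y - X = a • (Q - P) + b • (R - P)) (hZ : Z - X = c • (Q - P) + d • (R - P)) :
    triArea X Y Z = |a * d - b * c| * triArea P Q R := by
  rw [triArea_eq_sqrt_gramDet, triArea_eq_sqrt_gramDet, hY, hZ, gramDet_smul_add_smul,
    Real.sqrt_mul (sq_nonneg _), Real.sqrt_sq_eq_abs]
  ring

theorem stmt_6 (A B C D : EuclideanSpace ℝ (Fin 3))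
    (hcop : Coplanar ℝ ({A, B, C, D} : Set (EuclideanSpace ℝ (Fin 3))))
    (hncol : ¬ Collinear ℝ ({A, B, C, D} : Set (EuclideanSpace ℝ (Fin 3))))
    (h1 : triArea A B C = triArea A B D)
    (h2 : triArea A B C = triArea A C D)
    (h3 : triArea A B C = triArea B C D) :
    midpoint ℝ A B = midpoint ℝ C D ∨ midpoint ℝ A C = midpoint ℝ B D ∨
      midpoint ℝ A D = midpoint ℝ B C := by
  -- if `ABC` were degenerate, so would be all four triangles
  have hABC : ¬ Collinear ℝ {A, B, C} := fun h ↦ hncol <| by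
    have h0 := triArea_eq_zero_iff.mpr h
    exact collinear_of_collinear_triples h (triArea_eq_zero_iff.mp (h1 ▸ h0))
      (triArea_eq_zero_iff.mp (h2 ▸ h0))
  have hS : triArea A B C ≠ 0 := mt triArea_eq_zero_iff.mp hABC
  obtain ⟨s, t, hD⟩ := exists_vsub_eq_smul_add_smul_of_coplanar hABC hcop
  simp only [vsub_eq_sub] at hD
  have hB : B - A = (1 : ℝ) • (B - A) + (0 : ℝ) • (C - A) := by module
  have hC : C - A = (0 : ℝ) • (B - A) + (1 : ℝ) • (C - A) := by module
  have hBC : C - B = (-1 : ℝ) • (B - A) + (1 : ℝ) • (C - A) := by module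
  have hBD : D - B = (s - 1) • (B - A) + t • (C - A) := by
    linear_combination (norm := module) hD
  have unit {x : ℝ} (h : triArea A B C = x * triArea A B C) : x = 1 :=
    (mul_eq_right₀ hS).mp h.symm
  have ht := unit (h1.trans (triArea_eq_abs_mul_triArea hB hD))
  have hs := unit (h2.trans (triArea_eq_abs_mul_triArea hC hD))
  have hst := unit (h3.trans (triArea_eq_abs_mul_triArea hBC hBD))
  norm_num at ht hs hst
  rcases abs_eq (zero_le_one' ℝ) |>.mp hs with rfl | rfl <;>
    rcases abs_eq (zero_le_one' ℝ) |>.mp ht with rfl | rfl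
  · right; right
    rw [midpoint_eq_midpoint_iff_vsub_eq_vsub, vsub_eq_sub, vsub_eq_sub]
    linear_combination (norm := module) hD
  · left
    rw [midpoint_eq_midpoint_iff_vsub_eq_vsub, vsub_eq_sub, vsub_eq_sub]
    linear_combination (norm := module) -hD
  · right; left
    rw [midpoint_eq_midpoint_iff_vsub_eq_vsub, vsub_eq_sub, vsub_eq_sub]
    linear_combination (norm := module) -hD
  · norm_num at hst
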